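/- arXiv:2005.11525 — 4 statements merged into one kernel-verified Lean document; each statement's English description precedes it below -/
import Mathlib

section
/- Let V, W, A, B be finite-dimensional vector spaces over a field K with perfect bilinear pairings S : A ⊗ B → K, P : V ⊗ B → K, P' : W ⊗ A → K, and suppose there are isomorphisms φ : A → V and a pairing I : W ⊗ V → K such that (for all a ∈ A, b ∈ B) P(φ(a), b) = S(a, b) and (for all w ∈ W, a ∈ A) I(w, φ(a)) = P'(w, a). Then, in terms of matrices with respect to fixed bases, the transpose of I equals P ∘ S⁻¹ ∘ ᵗP', i.e. ᵗI = P · S⁻¹ · ᵗP'. -/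
/-!
With `C` the matrix of `φ`, the two compatibilities say `S = ᵗC · P` and `P' = I · C` on the level
of matrices. Eliminating `C` gives `P · S⁻¹ · ᵗP' = P · P⁻¹ · ᵗC⁻¹ · ᵗC · ᵗI = ᵗI`, where `C` is
invertible because `φ` is an isomorphism, and `P` because `S` is perfect.
-/

open Matrix

theorem Matrix.of_apply_basis_eq_toMatrix₂ {R M N n m : Type*} [CommSemiring R]
    [AddCommMonoid M] [Module R M] [AddCommMonoid N] [Module R N]
    [Fintype n] [Fintype m] [DecidableEq n] [DecidableEq m]
    (b₁ : Module.Basis n R M) (b₂ : Module.Basis m R N) (B : M →ₗ[R] N →ₗ[R] R) :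
    (Matrix.of fun i j => B (b₁ i) (b₂ j)) = LinearMap.toMatrix₂ b₁ b₂ B := by
  ext i j
  rw [LinearMap.toMatrix₂_apply, of_apply]

theorem LinearMap.det_toMatrix₂_ne_zero_of_injective {R M N n : Type*} [CommRing R] [IsDomain R]
    [AddCommGroup M] [Module R M] [AddCommGroup N] [Module R N] [Fintype n] [DecidableEq n]
    (b₁ : Module.Basis n R M) (b₂ : Module.Basis n R N) {B : M →ₗ[R] N →ₗ[R] R}
    (hB : Function.Injective B) : (LinearMap.toMatrix₂ b₁ b₂ B).det ≠ 0 := by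
  have hsep : B.SeparatingLeft := LinearMap.separatingLeft_iff_ker_eq_bot.mpr (ker_eq_bot.mpr hB)
  exact Matrix.separatingLeft_iff_det_ne_zero.mp ((separatingLeft_toMatrix₂_iff b₁ b₂).mpr hsep)

theorem Matrix.transpose_eq_mul_inv_mul_transpose_of_eq_mul {R n : Type*} [CommRing R]
    [Fintype n] [DecidableEq n] {C P S I P' : Matrix n n R}
    (hS : S = Cᵀ * P) (hP' : P' = I * C) (hC : IsUnit C.det) (hSdet : IsUnit S.det) :
    Iᵀ = P * S⁻¹ * P'ᵀ := by
  have hCt : IsUnit Cᵀ.det := by rwa [det_transpose]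
  have hP : IsUnit P.det := by
    rw [hS, det_mul] at hSdet
    exact isUnit_of_mul_isUnit_right hSdet
  rw [hS, hP', transpose_mul, mul_inv_rev]
  calc Iᵀ = (P * P⁻¹) * (Cᵀ⁻¹ * Cᵀ) * Iᵀ := by
        rw [mul_nonsing_inv _ hP, nonsing_inv_mul _ hCt, Matrix.one_mul, Matrix.one_mul]
    _ = P * (P⁻¹ * Cᵀ⁻¹) * (Cᵀ * Iᵀ) := by simp only [Matrix.mul_assoc]

theorem quadratic_relation_transpose_intersection_eq_general
    (K : Type*) [Field K]
    (V W A B : Type*)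
    [AddCommGroup V] [Module K V] [AddCommGroup W] [Module K W]
    [AddCommGroup A] [Module K A] [AddCommGroup B] [Module K B]
    (n : Type*) [Fintype n] [DecidableEq n]
    (bV : Module.Basis n K V) (bW : Module.Basis n K W) (bA : Module.Basis n K A) (bB : Module.Basis n K B)
    (S : A →ₗ[K] B →ₗ[K] K) (P : V →ₗ[K] B →ₗ[K] K)
    (P' : W →ₗ[K] A →ₗ[K] K) (I : W →ₗ[K] V →ₗ[K] K)
    -- the pairings `S`, `P`, `P'` are perfect
    (hSperf : Function.Bijective (S : A → B →ₗ[K] K))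
    (φ : A ≃ₗ[K] V)
    (hP : ∀ (a : A) (b : B), P (φ a) b = S a b)
    (hI : ∀ (w : W) (a : A), I w (φ a) = P' w a) :
    (Matrix.of fun i j => I (bW i) (bV j))ᵀ =
      (Matrix.of fun i j => P (bV i) (bB j)) *
        (Matrix.of fun i j => S (bA i) (bB j))⁻¹ *
        (Matrix.of fun i j => P' (bW i) (bA j))ᵀ := by
  have hS : S = P.comp φ.toLinearMap := by ext a b; exact (hP a b).symm
  have hP' : P' = I.compl₂ φ.toLinearMap := by ext w a; exact (hI w a).symm
  simp only [of_apply_basis_eq_toMatrix₂]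
  refine transpose_eq_mul_inv_mul_transpose_of_eq_mul (C := LinearMap.toMatrix bA bV φ) ?_ ?_
    (φ.isUnit_det bA bV) (LinearMap.det_toMatrix₂_ne_zero_of_injective bA bB hSperf.injective).isUnit
  · rw [hS, LinearMap.toMatrix₂_comp bV bB]
  · rw [hP', LinearMap.toMatrix₂_compl₂ bW bV]

theorem quadratic_relation_transpose_intersection_eq
    (K : Type*) [Field K]
    (V W A B : Type*)
    [AddCommGroup V] [Module K V] [AddCommGroup W] [Module K W]
    [AddCommGroup A] [Module K A] [AddCommGroup B] [Module K B]
    [FiniteDimensional K V] [FiniteDimensional K W]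
    [FiniteDimensional K A] [FiniteDimensional K B]
    (n : Type*) [Fintype n] [DecidableEq n]
    (bV : Module.Basis n K V) (bW : Module.Basis n K W) (bA : Module.Basis n K A) (bB : Module.Basis n K B)
    (S : A →ₗ[K] B →ₗ[K] K) (P : V →ₗ[K] B →ₗ[K] K)
    (P' : W →ₗ[K] A →ₗ[K] K) (I : W →ₗ[K] V →ₗ[K] K)
    -- the pairings `S`, `P`, `P'` are perfect
    (hSperf : Function.Bijective (S : A → B →ₗ[K] K))
    (hPperf : Function.Bijective (P : V → B →ₗ[K] K))
    (hP'perf : Function.Bijective (P' : W → A →ₗ[K] K))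
    (φ : A ≃ₗ[K] V)
    (hP : ∀ (a : A) (b : B), P (φ a) b = S a b)
    (hI : ∀ (w : W) (a : A), I w (φ a) = P' w a) :
    (Matrix.of fun i j => I (bW i) (bV j))ᵀ =
      (Matrix.of fun i j => P (bV i) (bB j)) *
        (Matrix.of fun i j => S (bA i) (bB j))⁻¹ *
        (Matrix.of fun i j => P' (bW i) (bA j))ᵀ :=
  quadratic_relation_transpose_intersection_eq_general K V W A B n bV bW bA bB S P P' I hSperf φ hP
    hI
end

section
/- With the notation of the previous statement, suppose additionally that B_rd,mod and B_mod,rd are perfect pairings of finite-dimensional spaces, with dim V_rd = dim W_mod and dim V_mod = dim W_rd, and the compatibility B_rd,mod(x, b(y)) = B_mod,rd(a(x), y) holds. Then the induced middle pairing B_mid : image(a) ⊗ image(b) → K is non-degenerate. -/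
/-!
If `a x` pairs to zero with all of `image b`, compatibility gives `B_mod,rd (a x) = 0`, so
`a x = 0` because `B_mod,rd` is injective. If `b y` pairs to zero with all of `image a`, then
`B_rd,mod x (b y) = 0` for every `x`; as `B_rd,mod` is surjective, every functional on `W_mod`
kills `b y`, so `b y = 0`.
-/

namespace LinearMap

variable {R M N : Type*} [CommSemiring R] [AddCommMonoid M] [Module R M]
  [AddCommMonoid N] [Module R N]

theorem separatingLeft_of_injective {B : M →ₗ[R] N →ₗ[R] R} (hB : Function.Injective B) :
    B.SeparatingLeft :=
  separatingLeft_iff_linear_nontrivial.mpr fun _ hx => hB (hx.trans B.map_zero.symm)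

theorem separatingRight_of_surjective [Module.Projective R N] {B : M →ₗ[R] N →ₗ[R] R}
    (hB : Function.Surjective B) : B.SeparatingRight := fun y hy =>
  (Module.forall_dual_apply_eq_zero_iff R y).mp fun φ => by
    obtain ⟨x, rfl⟩ := hB φ
    exact hy x

section Range

variable {V W : Type*} [AddCommMonoid V] [Module R V] [AddCommMonoid W] [Module R W]
  {a : V →ₗ[R] M} {b : W →ₗ[R] N} {P : range a →ₗ[R] range b →ₗ[R] R}

theorem separatingLeft_of_apply_range {B : M →ₗ[R] W →ₗ[R] R} (hB : B.SeparatingLeft)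
    (hP : ∀ x y, P ⟨a x, mem_range_self a x⟩ ⟨b y, mem_range_self b y⟩ = B (a x) y) :
    P.SeparatingLeft := by
  rintro ⟨_, x, rfl⟩ hx
  exact Subtype.ext <| hB _ fun y => (hP x y).symm.trans (hx _)

theorem separatingRight_of_apply_range {B : V →ₗ[R] N →ₗ[R] R} (hB : B.SeparatingRight)
    (hP : ∀ x y, P ⟨a x, mem_range_self a x⟩ ⟨b y, mem_range_self b y⟩ = B x (b y)) :
    P.SeparatingRight :=
  flip_separatingLeft.mp <|
    separatingLeft_of_apply_range (flip_separatingLeft.mpr hB) fun y x => hP x y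

end Range

end LinearMap

theorem middle_pairing_nondegenerate_general
    (K : Type*) [Field K]
    (Vrd Vmod Wrd Wmod : Type*)
    [AddCommGroup Vrd] [Module K Vrd] [AddCommGroup Vmod] [Module K Vmod]
    [AddCommGroup Wrd] [Module K Wrd] [AddCommGroup Wmod] [Module K Wmod]
    (a : Vrd →ₗ[K] Vmod) (b : Wrd →ₗ[K] Wmod)
    (B₁ : Vrd →ₗ[K] Wmod →ₗ[K] K) (B₂ : Vmod →ₗ[K] Wrd →ₗ[K] K)
    -- `B₁` and `B₂` are perfect
    (hB₁perf : Function.Bijective (B₁ : Vrd → Wmod →ₗ[K] K))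
    (hB₂perf : Function.Bijective (B₂ : Vmod → Wrd →ₗ[K] K))
    (hcompat : ∀ (x : Vrd) (y : Wrd), B₁ x (b y) = B₂ (a x) y)
    -- the induced middle pairing
    (Bmid : LinearMap.range a →ₗ[K] LinearMap.range b →ₗ[K] K)
    (hBmid : ∀ (x : Vrd) (y : Wrd),
      Bmid ⟨a x, LinearMap.mem_range_self a x⟩ ⟨b y, LinearMap.mem_range_self b y⟩
        = B₁ x (b y)) :
    (∀ u : LinearMap.range a, (∀ v : LinearMap.range b, Bmid u v = 0) → u = 0) ∧
    (∀ v : LinearMap.range b, (∀ u : LinearMap.range a, Bmid u v = 0) → v = 0) := by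
  have hleft : Bmid.SeparatingLeft :=
    LinearMap.separatingLeft_of_apply_range
      (LinearMap.separatingLeft_of_injective hB₂perf.injective)
      fun x y => (hBmid x y).trans (hcompat x y)
  have hright : Bmid.SeparatingRight :=
    LinearMap.separatingRight_of_apply_range
      (LinearMap.separatingRight_of_surjective hB₁perf.surjective) hBmid
  exact ⟨hleft, hright⟩

theorem middle_pairing_nondegenerate
    (K : Type*) [Field K]
    (Vrd Vmod Wrd Wmod : Type*)
    [AddCommGroup Vrd] [Module K Vrd] [AddCommGroup Vmod] [Module K Vmod]
    [AddCommGroup Wrd] [Module K Wrd] [AddCommGroup Wmod] [Module K Wmod]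
    [FiniteDimensional K Vrd] [FiniteDimensional K Vmod]
    [FiniteDimensional K Wrd] [FiniteDimensional K Wmod]
    (hdim₁ : Module.finrank K Vrd = Module.finrank K Wmod)
    (hdim₂ : Module.finrank K Vmod = Module.finrank K Wrd)
    (a : Vrd →ₗ[K] Vmod) (b : Wrd →ₗ[K] Wmod)
    (B₁ : Vrd →ₗ[K] Wmod →ₗ[K] K) (B₂ : Vmod →ₗ[K] Wrd →ₗ[K] K)
    -- `B₁` and `B₂` are perfect
    (hB₁perf : Function.Bijective (B₁ : Vrd → Wmod →ₗ[K] K))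
    (hB₂perf : Function.Bijective (B₂ : Vmod → Wrd →ₗ[K] K))
    (hcompat : ∀ (x : Vrd) (y : Wrd), B₁ x (b y) = B₂ (a x) y)
    -- the induced middle pairing
    (Bmid : LinearMap.range a →ₗ[K] LinearMap.range b →ₗ[K] K)
    (hBmid : ∀ (x : Vrd) (y : Wrd),
      Bmid ⟨a x, LinearMap.mem_range_self a x⟩ ⟨b y, LinearMap.mem_range_self b y⟩
        = B₁ x (b y)) :
    (∀ u : LinearMap.range a, (∀ v : LinearMap.range b, Bmid u v = 0) → u = 0) ∧
    (∀ v : LinearMap.range b, (∀ u : LinearMap.range a, Bmid u v = 0) → v = 0) :=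
  middle_pairing_nondegenerate_general K Vrd Vmod Wrd Wmod a b B₁ B₂ hB₁perf hB₂perf hcompat Bmid
    hBmid
end

section
/- Let X be a topological space and let F̃ be a fine presheaf of K-vector spaces on X (i.e. for every finite open covering (U_i) there exist closed sets F_i ⊆ U_i and presheaf endomorphisms ℓ̃_i with ℓ̃_i = 0 on F̃(U) whenever U ∩ F_i = ∅, and Σ_i ℓ̃_i = id). If X is compact and F̃ satisfies the surjectivity property (for every x ∈ X, the map F̃(X) → F_x to the stalk of the associated sheaf F is surjective), then the natural map F̃(X) → Γ(X, F) to global sections of the sheafification is surjective. If F̃ moreover satisfies the injectivity property (F̃(X) → ∏_x F_x is injective), this map is an isomorphism. -/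
/-!
Statement 4 (Proposition A.1 of the paper): let `F̃` be a fine presheaf of
`K`-vector spaces on a compact topological space `X` satisfying the
surjectivity property (`F̃(X) → F_x` is onto for every stalk of the associated
sheaf `F`).  Then the natural map `F̃(X) → Γ(X, F)` to the global sections of
the sheafification is surjective; if moreover `F̃(X) → ∏_x F_x` is injective,
it is an isomorphism.

We use a concrete presheaf framework: stalks are germ classes, and global
sections of the sheafification are families of germs that are locally
represented by presheaf sections.
-/

open TopologicalSpace

namespace Stmt4

/-- A presheaf of `K`-vector spaces on `X`. -/
structure Psh (K : Type) [Field K] (X : Type) [TopologicalSpace X] where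
  sec : Opens X → Type
  [acg : ∀ U, AddCommGroup (sec U)]
  [mod : ∀ U, Module K (sec U)]
  res : ∀ {U V : Opens X}, V ≤ U → sec U →ₗ[K] sec V
  res_rfl : ∀ (U : Opens X) (s : sec U), res (le_refl U) s = s
  res_res : ∀ {U V W : Opens X} (hVU : V ≤ U) (hWV : W ≤ V) (s : sec U),
      res hWV (res hVU s) = res (hWV.trans hVU) s

attribute [instance] Psh.acg Psh.mod

variable {K : Type} [Field K] {X : Type} [TopologicalSpace X]

/-- The germ relation at `x`. -/
def germSetoid (F : Psh K X) (x : X) :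
    Setoid (Σ U : {U : Opens X // x ∈ U}, F.sec U.1) where
  r a b := ∃ (W : Opens X) (hxW : x ∈ W) (h1 : W ≤ a.1.1) (h2 : W ≤ b.1.1),
    F.res h1 a.2 = F.res h2 b.2
  iseqv := by
    constructor
    · rintro ⟨U, s⟩
      exact ⟨U.1, U.2, le_rfl, le_rfl, rfl⟩
    · rintro a b ⟨W, hxW, h1, h2, h⟩
      exact ⟨W, hxW, h2, h1, h.symm⟩
    · rintro a b c ⟨W, hxW, h1, h2, h⟩ ⟨W', hxW', h1', h2', h'⟩
      refine ⟨W ⊓ W', ⟨hxW, hxW'⟩, inf_le_left.trans h1, inf_le_right.trans h2', ?_⟩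
      rw [← F.res_res h1 inf_le_left, ← F.res_res h2' inf_le_right, h, ← h',
        F.res_res, F.res_res]

/-- The stalk of (the sheafification of) `F` at `x`. -/
def Stalk (F : Psh K X) (x : X) : Type := Quotient (germSetoid F x)

/-- The germ of a section at a point. -/
def germ (F : Psh K X) {U : Opens X} (x : X) (hx : x ∈ U) (s : F.sec U) :
    Stalk F x := Quotient.mk _ ⟨⟨U, hx⟩, s⟩

/-- Global sections of the sheafification: families of germs locally
represented by presheaf sections. -/
def Gsh (F : Psh K X) : Type :=
  {σ : ∀ x : X, Stalk F x //
    ∀ x : X, ∃ (U : Opens X) (_ : x ∈ U) (s : F.sec U),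
      ∀ y (hy : y ∈ U), σ y = germ F y hy s}

/-- The natural map from global presheaf sections to global sections of the
sheafification. -/
def toGsh (F : Psh K X) (s : F.sec ⊤) : Gsh F :=
  ⟨fun x => germ F x (Opens.mem_top x) s, fun y => ⟨⊤, Opens.mem_top y, s, fun _ _ => rfl⟩⟩

/-!
By the surjectivity property, a section of the sheafification is near each point `x` the germ
family of a global section `g x`. Finitely many of these neighbourhoods `V x` cover `X`, and a
partition of unity `ℓ` subordinate to them glues the `g x` into the global section `∑ ℓ x (g x)`.
-/

def IsFine (F : Psh K X) : Prop :=
  ∀ (ι : Type) [Fintype ι] (U : ι → Opens X), (⨆ i, U i) = ⊤ →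
    ∃ (C : ι → Set X), (∀ i, IsClosed (C i) ∧ C i ⊆ (U i : Set X)) ∧
    ∃ ℓ : ι → ∀ V : Opens X, F.sec V →ₗ[K] F.sec V,
      (∀ i (V W : Opens X) (h : W ≤ V) (s : F.sec V),
        F.res h (ℓ i V s) = ℓ i W (F.res h s)) ∧
      (∀ i (V : Opens X), (V : Set X) ∩ C i = ∅ → ∀ s : F.sec V, ℓ i V s = 0) ∧
      (∀ (V : Opens X) (s : F.sec V), ∑ i, ℓ i V s = s)

section Germs

variable {F : Psh K X}

theorem germ_eq_germ_iff {U V : Opens X} {x : X} (hxU : x ∈ U) (hxV : x ∈ V)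
    {s : F.sec U} {t : F.sec V} :
    germ F x hxU s = germ F x hxV t ↔
      ∃ (W : Opens X) (_ : x ∈ W) (h₁ : W ≤ U) (h₂ : W ≤ V), F.res h₁ s = F.res h₂ t :=
  ⟨Quotient.exact, fun ⟨W, hxW, h₁, h₂, h⟩ => Quotient.sound ⟨W, hxW, h₁, h₂, h⟩⟩

theorem germ_res {U V : Opens X} (h : V ≤ U) {x : X} (hx : x ∈ V) (s : F.sec U) :
    germ F x hx (F.res h s) = germ F x (h hx) s :=
  (germ_eq_germ_iff _ _).2 ⟨V, hx, le_rfl, h, F.res_rfl _ _⟩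

theorem germ_sum_eq_germ_sum {ι : Type*} [Fintype ι] {U : Opens X} {x : X} (hx : x ∈ U)
    {s t : ι → F.sec U} (h : ∀ i, germ F x hx (s i) = germ F x hx (t i)) :
    germ F x hx (∑ i, s i) = germ F x hx (∑ i, t i) := by
  choose W hxW h₁ h₂ hW using fun i => (germ_eq_germ_iff hx hx).1 (h i)
  let W₀ : Opens X := U ⊓ ⟨⋂ i, W i, isOpen_iInter_of_finite fun i => (W i).isOpen⟩
  have hW₀ : ∀ i, W₀ ≤ W i := fun i _ hz => Set.mem_iInter.1 hz.2 i
  refine (germ_eq_germ_iff hx hx).2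
    ⟨W₀, ⟨hx, Set.mem_iInter.2 hxW⟩, inf_le_left, inf_le_left, ?_⟩
  simp only [map_sum]
  refine Finset.sum_congr rfl fun i _ => ?_
  rw [← F.res_res (h₁ i) (hW₀ i), ← F.res_res (h₂ i) (hW₀ i), hW i]

variable (ℓ : ∀ V : Opens X, F.sec V →ₗ[K] F.sec V)
  (hℓ : ∀ (V W : Opens X) (h : W ≤ V) (s : F.sec V), F.res h (ℓ V s) = ℓ W (F.res h s))
include hℓ

theorem germ_apply_eq_of_germ_eq {U V : Opens X} {x : X} (hxU : x ∈ U) (hxV : x ∈ V)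
    {s : F.sec U} {t : F.sec V} (h : germ F x hxU s = germ F x hxV t) :
    germ F x hxU (ℓ U s) = germ F x hxV (ℓ V t) := by
  obtain ⟨W, hxW, h₁, h₂, hst⟩ := (germ_eq_germ_iff hxU hxV).1 h
  rw [← germ_res h₁ hxW (ℓ U s), ← germ_res h₂ hxW (ℓ V t), hℓ, hℓ, hst]

theorem germ_apply_eq_zero_of_notMem {C : Set X} (hC : IsClosed C)
    (hvan : ∀ V : Opens X, (V : Set X) ∩ C = ∅ → ∀ s : F.sec V, ℓ V s = 0)
    {U : Opens X} {x : X} (hx : x ∈ U) (hxC : x ∉ C) (s : F.sec U) :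
    germ F x hx (ℓ U s) = germ F x hx 0 := by
  let W : Opens X := U ⊓ ⟨Cᶜ, hC.isOpen_compl⟩
  have hWC : (W : Set X) ∩ C = ∅ :=
    Set.eq_empty_of_forall_notMem fun _ hz => hz.1.2 hz.2
  refine (germ_eq_germ_iff hx hx).2 ⟨W, ⟨hx, hxC⟩, inf_le_left, inf_le_left, ?_⟩
  rw [hℓ, hvan W hWC, map_zero]

end Germs

/-- Near `x ∈ V j` each term `ℓ i (g i)` has the germ of `ℓ i (g j)`: on `V i` since `g i` and
`g j` agree there, off `V i` since both vanish near `x ∉ C i`. -/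
theorem germ_sum_partition_eq {F : Psh K X} {ι : Type*} [Fintype ι] {V : ι → Opens X}
    {C : ι → Set X} (hC : ∀ i, IsClosed (C i) ∧ C i ⊆ (V i : Set X))
    {ℓ : ι → ∀ W : Opens X, F.sec W →ₗ[K] F.sec W}
    (hℓ : ∀ i (W W' : Opens X) (h : W' ≤ W) (s : F.sec W),
      F.res h (ℓ i W s) = ℓ i W' (F.res h s))
    (hvan : ∀ i (W : Opens X), (W : Set X) ∩ C i = ∅ → ∀ s : F.sec W, ℓ i W s = 0)
    (hsum : ∀ (W : Opens X) (s : F.sec W), ∑ i, ℓ i W s = s)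
    {U : Opens X} {g : ι → F.sec U}
    (hg : ∀ i j x (hx : x ∈ U), x ∈ V i → x ∈ V j → germ F x hx (g i) = germ F x hx (g j))
    {x : X} (hx : x ∈ U) {j : ι} (hxj : x ∈ V j) :
    germ F x hx (∑ i, ℓ i U (g i)) = germ F x hx (g j) := by
  calc germ F x hx (∑ i, ℓ i U (g i)) = germ F x hx (∑ i, ℓ i U (g j)) :=
        germ_sum_eq_germ_sum hx fun i => ?_
    _ = germ F x hx (g j) := by rw [hsum]
  by_cases hxi : x ∈ V i
  · exact germ_apply_eq_of_germ_eq (ℓ i) (hℓ i) hx hx (hg i j x hx hxi hxj)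
  · have hxC : x ∉ C i := fun h => hxi ((hC i).2 h)
    rw [germ_apply_eq_zero_of_notMem (ℓ i) (hℓ i) (hC i).1 (hvan i) hx hxC,
      germ_apply_eq_zero_of_notMem (ℓ i) (hℓ i) (hC i).1 (hvan i) hx hxC]

theorem exists_finset_iSup_eq_top [CompactSpace X] (V : X → Opens X) (hV : ∀ x, x ∈ V x) :
    ∃ t : Finset X, ⨆ x : t, V x = ⊤ := by
  obtain ⟨t, ht⟩ := CompactSpace.elim_nhds_subcover (fun x => (V x : Set X))
    fun x => (V x).isOpen.mem_nhds (hV x)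
  refine ⟨t, SetLike.coe_injective ?_⟩
  rw [Opens.coe_iSup, Opens.coe_top, Set.iUnion_subtype]
  exact ht

theorem Gsh.exists_nhds_eq_germ_global {F : Psh K X}
    (hsurj : ∀ x : X, Function.Surjective (fun s : F.sec ⊤ => germ F x (Opens.mem_top x) s))
    (σ : Gsh F) (x : X) :
    ∃ (V : Opens X) (_ : x ∈ V) (g : F.sec ⊤),
      ∀ y ∈ V, σ.1 y = germ F y (Opens.mem_top y) g := by
  obtain ⟨U, hxU, s, hs⟩ := σ.2 x
  obtain ⟨g, hgx⟩ := hsurj x (σ.1 x)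
  obtain ⟨W, hxW, h₁, h₂, h⟩ := (germ_eq_germ_iff _ hxU).1 (hgx.trans (hs x hxU))
  refine ⟨W, hxW, g, fun y hy => ?_⟩
  rw [hs y (h₂ hy)]
  exact ((germ_eq_germ_iff _ _).2 ⟨W, hy, h₁, h₂, h⟩).symm

theorem toGsh_surjective [CompactSpace X] {F : Psh K X} (hfine : IsFine F)
    (hsurj : ∀ x : X, Function.Surjective (fun s : F.sec ⊤ => germ F x (Opens.mem_top x) s)) :
    Function.Surjective (toGsh F) := by
  intro σ
  choose V hxV g hg using Gsh.exists_nhds_eq_germ_global hsurj σ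
  obtain ⟨t, ht⟩ := exists_finset_iSup_eq_top V hxV
  obtain ⟨C, hC, ℓ, hℓ, hvan, hsum⟩ := hfine t (fun i => V i) ht
  refine ⟨∑ i : t, ℓ i ⊤ (g i), Subtype.ext (funext fun x => ?_)⟩
  obtain ⟨j, hxj⟩ : ∃ j : t, x ∈ V j := Opens.mem_iSup.1 (ht ▸ Opens.mem_top x)
  rw [hg j x hxj]
  exact germ_sum_partition_eq hC hℓ hvan hsum
    (fun i j y _ hi hj => (hg i y hi).symm.trans (hg j y hj)) _ hxj

theorem fine_presheaf_sections_of_sheafification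
    [CompactSpace X] (F : Psh K X)
    -- `F̃` is a fine presheaf: for every finite open covering there are closed
    -- sets `F_i ⊆ U_i` and endomorphisms `ℓ_i` of the presheaf, vanishing on
    -- opens missing `F_i`, summing to the identity
    (hfine : ∀ (ι : Type) [Fintype ι] (U : ι → Opens X), (⨆ i, U i) = ⊤ →
      ∃ (Fc : ι → Set X), (∀ i, IsClosed (Fc i) ∧ Fc i ⊆ (U i : Set X)) ∧
      ∃ ℓ : ι → ∀ V : Opens X, F.sec V →ₗ[K] F.sec V,
        (∀ i (V W : Opens X) (h : W ≤ V) (s : F.sec V),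
          F.res h (ℓ i V s) = ℓ i W (F.res h s)) ∧
        (∀ i (V : Opens X), (V : Set X) ∩ Fc i = ∅ → ∀ s : F.sec V, ℓ i V s = 0) ∧
        (∀ (V : Opens X) (s : F.sec V), ∑ i, ℓ i V s = s))
    -- the surjectivity property: `F̃(X) → F_x` is onto for every `x`
    (hsurj : ∀ x : X, Function.Surjective
      (fun s : F.sec ⊤ => germ F x (Opens.mem_top x) s)) :
    Function.Surjective (toGsh F) ∧
    -- with the injectivity property, it is an isomorphism
    ((Function.Injective fun s : F.sec ⊤ =>
        (fun x : X => germ F x (Opens.mem_top x) s : ∀ x : X, Stalk F x)) →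
      Function.Bijective (toGsh F)) := by
  have surj := toGsh_surjective hfine hsurj
  exact ⟨surj, fun hinj => ⟨fun s t h => hinj (congrArg Subtype.val h), surj⟩⟩

end Stmt4
end

section
/- The total residue map res_D : Ω¹_{D̂}(*D) / {dφ̂ − ι_{D̂}η : φ̂ ∈ O_{D̂}(*D), η ∈ Ω¹(U)} → ℂ, induced by μ̂ ↦ Σ_{x∈D} res_x μ̂, is well-defined and is an isomorphism, identifying H²_{dR,c}(U) with ℂ for U = X∖D the complement of a nonempty finite set in a smooth projective curve X over ℂ. -/
/-!
Statement 19 (Example 3.7 of the paper): for `U = X ∖ D` the complement of a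
nonempty finite set `D` in a smooth projective curve `X` over `ℂ` (here
`X = ℙ¹`, with coordinates chosen so that `D = S ⊆ 𝔸¹ = ℂ`), the total
residue map
`res_D : Ω¹_{D̂}(*D) / {dφ̂ - ι_{D̂}η : φ̂ ∈ O_{D̂}(*D), η ∈ Ω¹(U)} → ℂ`,
induced by `μ̂ ↦ Σ_{x∈D} res_x μ̂`, is well defined and is an isomorphism,
identifying `H²_{dR,c}(U)` with `ℂ`.

`Ω¹_{D̂}(*D) = ⊕_{s∈S} ℂ((z_s)) dz_s` is realized as families of Laurent
series (`z_s = z - s`), `O_{D̂}(*D)` likewise, `d` is the componentwise formal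
derivative, and `Ω¹(U)` consists of the rational 1-forms `f dz` with poles
only in `S` (including at infinity, i.e. `f` vanishes to order `≥ 2` at `∞`);
`ι_{D̂}` is the Laurent expansion at each point of `S`.  Well-definedness,
injectivity and surjectivity are stated without forming the quotient.
-/

noncomputable section

namespace Stmt19

open Polynomial

/-- the componentwise formal derivative of a Laurent series -/
def lder (f : LaurentSeries ℂ) : LaurentSeries ℂ where
  coeff n := ((n + 1 : ℤ) : ℂ) * f.coeff (n + 1)
  isPWO_support' := by
    refine ((f.isPWO_support').image_of_monotone
      (f := fun n : ℤ => n - 1) fun a b h => sub_le_sub_right h 1).mono ?_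
    intro n hn
    have h1 : f.coeff (n + 1) ≠ 0 := by
      intro h
      apply hn
      simp [Function.mem_support, h]
    exact ⟨n + 1, h1, by ring⟩

/-- translation `z ↦ z + s` on rational functions -/
def translate (s : ℂ) : RatFunc ℂ →+* RatFunc ℂ :=
  RatFunc.liftRingHom
    ((algebraMap (Polynomial ℂ) (RatFunc ℂ)).comp
      (Polynomial.aeval (Polynomial.X + Polynomial.C s)).toRingHom)
    (by
      intro p hp
      have hp0 : p ≠ 0 := nonZeroDivisors.ne_zero hp
      have h1 : Polynomial.aeval (Polynomial.X + Polynomial.C s) p ≠ 0 := by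
        intro h
        exact hp0 (Polynomial.taylor_injective s
          (by rw [Polynomial.taylor_apply, Polynomial.comp_eq_aeval, h,
            Polynomial.taylor_apply, Polynomial.zero_comp]))
      exact mem_nonZeroDivisors_of_ne_zero
        (RatFunc.algebraMap_ne_zero h1))

variable (S : Finset ℂ)

/-- `Ω¹_{D̂}(*D) = ⊕_{s ∈ S} ℂ((z_s)) dz_s` (and likewise `O_{D̂}(*D)`):
families of Laurent series indexed by the points of `D = S` -/
abbrev FormalForms := {s : ℂ // s ∈ S} → LaurentSeries ℂ

/-- the Laurent expansion of a rational function at the points of `S`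
(in the local coordinates `z_s = z - s`) -/
def expand (f : RatFunc ℂ) : FormalForms S :=
  fun s => ((translate s.1 f : RatFunc ℂ) : LaurentSeries ℂ)

/-- `η = f dz` is a global algebraic 1-form on `U = ℙ¹ ∖ S`: its poles lie in
`S` and it has no pole at `∞` (a zero of order `≥ 2` of `f`) -/
def IsFormOnU (f : RatFunc ℂ) : Prop :=
  (∀ a : ℂ, f.denom.IsRoot a → a ∈ S) ∧ f.num.degree + 2 ≤ f.denom.degree

/-- the subspace `{dφ̂ - ι_{D̂} η}` of `Ω¹_{D̂}(*D)` -/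
def coboundaries : Set (FormalForms S) :=
  {μ | ∃ (φ : FormalForms S) (f : RatFunc ℂ), IsFormOnU S f ∧
    μ = (fun s => lder (φ s)) - expand S f}

/-- the total residue `Σ_{x ∈ D} res_x` -/
def res (μ : FormalForms S) : ℂ := ∑ s : {s : ℂ // s ∈ S}, (μ s).coeff (-1)

/-!
Residues are read off the Laurent expansions at the points of `S`.  A formal derivative has no
residue, and for a global form `η = f dz` on `U` a partial fraction decomposition of `f` shows
that `∑_{s ∈ S} res_s f` is the coefficient of `z⁻¹` in the expansion of `f` at `∞`, which
vanishes because `f` has a double zero there; so the total residue kills the coboundaries.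
Conversely, if `μ̂` has total residue `0`, the form `η = ∑_s c_s dz / (z - s)` with
`c_s = -res_s μ̂` is regular at `∞` (as `∑_s c_s = 0`), so `μ̂ + ι η` has no residues and is the
termwise derivative of its formal antiderivative.
-/

section LaurentExpansion

variable {K : Type*} [Field K]

open scoped LaurentSeries PowerSeries

lemma coe_algebraMap_polynomial (p : K[X]) :
    ((algebraMap K[X] (RatFunc K) p : RatFunc K) : K⸨X⸩) = ((p : K⟦X⟧) : K⸨X⸩) :=
  (RatFunc.coe_coe p).symm

lemma coeff_coe_div_eq_zero_of_neg {p q : K[X]} (hq : q.coeff 0 ≠ 0) {n : ℤ} (hn : n < 0) :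
    ((algebraMap K[X] (RatFunc K) p / algebraMap K[X] (RatFunc K) q : RatFunc K) : K⸨X⸩).coeff n
      = 0 := by
  have hq' : PowerSeries.constantCoeff (q : K⟦X⟧) ≠ 0 := by simpa using hq
  have hquot : ((algebraMap K[X] (RatFunc K) p / algebraMap K[X] (RatFunc K) q : RatFunc K)
      : K⸨X⸩) = ((p * (q : K⟦X⟧)⁻¹ : K⟦X⟧) : K⸨X⸩) := by
    rw [map_div₀, coe_algebraMap_polynomial, coe_algebraMap_polynomial, div_eq_iff,
      ← PowerSeries.coe_mul, mul_assoc, PowerSeries.inv_mul_cancel _ hq', mul_one]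
    exact (map_ne_zero_iff _ HahnSeries.ofPowerSeries_injective).mpr
      (ne_of_apply_ne PowerSeries.constantCoeff (by simpa using hq'))
  rw [hquot, PowerSeries.coeff_coe, if_pos hn]

lemma coeff_coe_div_X_pow (p : K[X]) (m k : ℕ) :
    ((algebraMap K[X] (RatFunc K) p / algebraMap K[X] (RatFunc K) (X ^ m) : RatFunc K)
      : K⸨X⸩).coeff ((k : ℤ) - m) = p.coeff k := by
  have hXm : ((algebraMap K[X] (RatFunc K) (X ^ m) : RatFunc K) : K⸨X⸩)
      = HahnSeries.single (m : ℤ) 1 := by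
    rw [coe_algebraMap_polynomial]; simp
  rw [map_div₀, hXm, div_eq_mul_inv, HahnSeries.inv_single, inv_one, sub_eq_add_neg,
    HahnSeries.coeff_mul_single_add, mul_one, coe_algebraMap_polynomial, PowerSeries.coeff_coe]
  simp

end LaurentExpansion

lemma taylor_coeff_of_natDegree_le {R : Type*} [CommSemiring R] {p : R[X]} {k : ℕ}
    (h : p.natDegree ≤ k) (r : R) : (taylor r p).coeff k = p.coeff k := by
  rcases h.lt_or_eq with h | rfl
  · rw [coeff_eq_zero_of_natDegree_lt h,
      coeff_eq_zero_of_natDegree_lt (by rwa [natDegree_taylor])]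
  · exact coeff_taylor_natDegree (r := r) (f := p)

lemma translate_div (s : ℂ) (p q : ℂ[X]) :
    translate s (algebraMap ℂ[X] (RatFunc ℂ) p / algebraMap ℂ[X] (RatFunc ℂ) q) =
      algebraMap ℂ[X] (RatFunc ℂ) (taylor s p) / algebraMap ℂ[X] (RatFunc ℂ) (taylor s q) := by
  rw [taylor_apply, taylor_apply, comp_eq_aeval, comp_eq_aeval]
  exact RatFunc.liftRingHom_apply_div _ _ p q

def resAt (s : ℂ) : RatFunc ℂ →+ ℂ where
  toFun f := ((translate s f : RatFunc ℂ) : LaurentSeries ℂ).coeff (-1)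
  map_zero' := by simp
  map_add' f g := by simp

lemma resAt_apply (s : ℂ) (f : RatFunc ℂ) :
    resAt s f = ((translate s f : RatFunc ℂ) : LaurentSeries ℂ).coeff (-1) := rfl

lemma coeff_expand (f : RatFunc ℂ) (s : {s : ℂ // s ∈ S}) :
    (expand S f s).coeff (-1) = resAt s f := rfl

lemma resAt_div_eq_zero_of_eval_ne_zero {s : ℂ} {q : ℂ[X]} (hq : q.eval s ≠ 0) (p : ℂ[X]) :
    resAt s (algebraMap ℂ[X] (RatFunc ℂ) p / algebraMap ℂ[X] (RatFunc ℂ) q) = 0 := by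
  rw [resAt_apply, translate_div]
  exact coeff_coe_div_eq_zero_of_neg (by rwa [taylor_coeff_zero]) (by norm_num)

lemma resAt_eq_zero_of_eval_denom_ne_zero {s : ℂ} {f : RatFunc ℂ} (h : f.denom.eval s ≠ 0) :
    resAt s f = 0 := by
  rw [← f.num_div_denom]
  exact resAt_div_eq_zero_of_eval_ne_zero h _

lemma resAt_div_X_sub_C_pow (s : ℂ) (r : ℂ[X]) {m : ℕ} (hm : 0 < m) :
    resAt s (algebraMap ℂ[X] (RatFunc ℂ) r / algebraMap ℂ[X] (RatFunc ℂ) ((X - C s) ^ m)) =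
      (taylor s r).coeff (m - 1) := by
  have hm' : (-1 : ℤ) = ((m - 1 : ℕ) : ℤ) - m := by omega
  have hpow : taylor s ((X - C s) ^ m) = X ^ m := by simp [taylor_apply]
  rw [resAt_apply, translate_div, hpow, hm', coeff_coe_div_X_pow]

section PartialFractions

variable {R : Type*} [CommRing R] {ι : Type*} [DecidableEq ι] {T : Finset ι} {g r : ι → R[X]}

lemma natDegree_le_natDegree_sub_one_of_degree_lt {p q : R[X]} (h : p.degree < q.degree) :
    p.natDegree ≤ q.natDegree - 1 := by
  rcases eq_or_ne p 0 with rfl | hp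
  · simp
  · have := natDegree_lt_natDegree hp h
    omega

lemma degree_sum_mul_prod_erase_lt [Nontrivial R] (hg : ∀ i ∈ T, (g i).Monic)
    (hr : ∀ i ∈ T, (r i).degree < (g i).degree) :
    (∑ i ∈ T, r i * ∏ j ∈ T.erase i, g j).degree < (∏ i ∈ T, g i).degree := by
  have hD : (∏ i ∈ T, g i).Monic := monic_prod_of_monic _ _ hg
  refine (degree_sum_le _ _).trans_lt ((Finset.sup_lt_iff ?_).mpr fun i hi => ?_)
  · exact bot_lt_iff_ne_bot.mpr (hD.ne_zero ∘ degree_eq_bot.mp)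
  · have hE : (∏ j ∈ T.erase i, g j).Monic :=
      monic_prod_of_monic _ _ fun j hj => hg j (Finset.mem_of_mem_erase hj)
    calc (r i * ∏ j ∈ T.erase i, g j).degree
        ≤ (r i).degree + (∏ j ∈ T.erase i, g j).degree := degree_mul_le _ _
      _ < (g i).degree + (∏ j ∈ T.erase i, g j).degree :=
        WithBot.add_lt_add_right (hE.ne_zero ∘ degree_eq_bot.mp) (hr i hi)
      _ = (∏ i ∈ T, g i).degree := by rw [← Finset.mul_prod_erase T g hi, hE.degree_mul]

lemma coeff_sum_mul_prod_erase [Nontrivial R] (hg : ∀ i ∈ T, (g i).Monic)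
    (hg₀ : ∀ i ∈ T, 0 < (g i).natDegree) (hr : ∀ i ∈ T, (r i).degree < (g i).degree) :
    (∑ i ∈ T, r i * ∏ j ∈ T.erase i, g j).coeff ((∏ i ∈ T, g i).natDegree - 1) =
      ∑ i ∈ T, (r i).coeff ((g i).natDegree - 1) := by
  rw [finsetSum_coeff]
  refine Finset.sum_congr rfl fun i hi => ?_
  have hE : (∏ j ∈ T.erase i, g j).Monic :=
    monic_prod_of_monic _ _ fun j hj => hg j (Finset.mem_of_mem_erase hj)
  have hdeg : (∏ i ∈ T, g i).natDegree - 1 =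
      ((g i).natDegree - 1) + (∏ j ∈ T.erase i, g j).natDegree := by
    rw [← Finset.mul_prod_erase T g hi, (hg i hi).natDegree_mul hE]
    have := hg₀ i hi
    omega
  rw [hdeg, coeff_mul_add_eq_of_natDegree_le
    (natDegree_le_natDegree_sub_one_of_degree_lt (hr i hi)) le_rfl, hE.coeff_natDegree, mul_one]

end PartialFractions

lemma algebraMap_sum_mul_prod_erase_div {K : Type*} [Field K] {ι : Type*} [DecidableEq ι]
    {T : Finset ι} {g : ι → K[X]} (hg : ∀ i ∈ T, g i ≠ 0) (r : ι → K[X]) :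
    algebraMap K[X] (RatFunc K) (∑ i ∈ T, r i * ∏ j ∈ T.erase i, g j) /
        algebraMap K[X] (RatFunc K) (∏ i ∈ T, g i) =
      ∑ i ∈ T, algebraMap K[X] (RatFunc K) (r i) / algebraMap K[X] (RatFunc K) (g i) := by
  rw [map_sum, Finset.sum_div]
  refine Finset.sum_congr rfl fun i hi => ?_
  rw [← Finset.mul_prod_erase T g hi, map_mul, map_mul, mul_div_mul_right]
  exact map_ne_zero_iff _ (IsFractionRing.injective K[X] (RatFunc K)) |>.mpr
    (Finset.prod_ne_zero_iff.mpr fun j hj => hg j (Finset.mem_of_mem_erase hj))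

theorem sum_resAt_div_prod_X_sub_C_pow (T : Finset ℂ) {m : ℂ → ℕ} (hm : ∀ a ∈ T, 0 < m a)
    {N : ℂ[X]} (hN : N.degree < (∏ a ∈ T, (X - C a) ^ m a).degree) :
    ∑ a ∈ T, resAt a (algebraMap ℂ[X] (RatFunc ℂ) N /
        algebraMap ℂ[X] (RatFunc ℂ) (∏ a ∈ T, (X - C a) ^ m a)) =
      N.coeff ((∏ a ∈ T, (X - C a) ^ m a).natDegree - 1) := by
  classical
  set g : ℂ → ℂ[X] := fun a => (X - C a) ^ m a
  have hg : ∀ a ∈ T, (g a).Monic := fun a _ => (monic_X_sub_C a).pow _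
  have hgdeg : ∀ a ∈ T, (g a).natDegree = m a := fun a _ => by simp [g]
  have hcop : (T : Set ℂ).Pairwise fun a b => IsCoprime (g a) (g b) := fun a _ b _ hab =>
    (isCoprime_X_sub_C_of_isUnit_sub (sub_ne_zero.2 hab).isUnit).pow
  obtain ⟨q, r, hr, hNqr⟩ := eq_quo_mul_prod_add_sum_rem_mul_prod N hg hcop
  have hq : q = 0 := by
    have hD : (∏ a ∈ T, g a).Monic := monic_prod_of_monic _ _ hg
    rw [← (div_modByMonic_unique (f := N) q _ hD ⟨by rw [hNqr]; ring,
      degree_sum_mul_prod_erase_lt hg hr⟩).1, divByMonic_eq_zero_iff hD]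
    exact hN
  rw [hq, zero_mul, zero_add] at hNqr
  have hres : ∀ a ∈ T, resAt a (algebraMap ℂ[X] (RatFunc ℂ) N /
      algebraMap ℂ[X] (RatFunc ℂ) (∏ a ∈ T, g a)) = (r a).coeff (m a - 1) := by
    intro a ha
    rw [hNqr, algebraMap_sum_mul_prod_erase_div (fun b hb => (hg b hb).ne_zero), map_sum,
      Finset.sum_eq_single a]
    · rw [resAt_div_X_sub_C_pow a (r a) (hm a ha), taylor_coeff_of_natDegree_le]
      simpa only [hgdeg a ha] using natDegree_le_natDegree_sub_one_of_degree_lt (hr a ha)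
    · intro b _ hba
      exact resAt_div_eq_zero_of_eval_ne_zero (by simp [g, sub_eq_zero, Ne.symm hba]) _
    · exact fun h => absurd ha h
  rw [Finset.sum_congr rfl hres, hNqr,
    coeff_sum_mul_prod_erase hg (fun a ha => hgdeg a ha ▸ hm a ha) hr]
  exact Finset.sum_congr rfl fun a ha => by rw [hgdeg a ha]

lemma degree_num_add_two_le_iff {K : Type*} [Field K] {f : RatFunc K} (hf : f ≠ 0) :
    f.num.degree + 2 ≤ f.denom.degree ↔ f.intDegree ≤ -2 := by
  rw [degree_eq_natDegree (RatFunc.num_ne_zero hf), degree_eq_natDegree f.denom_ne_zero,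
    RatFunc.intDegree, ← Nat.cast_ofNat, ← Nat.cast_add, Nat.cast_le]
  omega

lemma prod_X_sub_C_pow_rootMultiplicity {K : Type*} [Field K] [IsAlgClosed K] [DecidableEq K]
    (p : K[X]) (hp : p.Monic) :
    ∏ a ∈ p.roots.toFinset, (X - C a) ^ p.rootMultiplicity a = p := by
  rw [← prod_multiset_root_eq_finset_root, ← (IsAlgClosed.splits p).eq_prod_roots_of_monic hp]

theorem sum_resAt_eq_coeff_num {f : RatFunc ℂ} (hf : f.num.degree < f.denom.degree)
    {T : Finset ℂ} (hT : ∀ a, f.denom.IsRoot a → a ∈ T) :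
    ∑ a ∈ T, resAt a f = f.num.coeff (f.denom.natDegree - 1) := by
  have hD := prod_X_sub_C_pow_rootMultiplicity f.denom f.monic_denom
  have hroots : f.denom.roots.toFinset ⊆ T := fun a ha =>
    hT a (isRoot_of_mem_roots (Multiset.mem_toFinset.mp ha))
  calc ∑ a ∈ T, resAt a f = ∑ a ∈ f.denom.roots.toFinset, resAt a f := by
        refine (Finset.sum_subset hroots fun a _ ha =>
          resAt_eq_zero_of_eval_denom_ne_zero fun h => ha ?_).symm
        exact Multiset.mem_toFinset.mpr ((mem_roots f.denom_ne_zero).mpr h)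
    _ = ∑ a ∈ f.denom.roots.toFinset, resAt a
          (algebraMap ℂ[X] (RatFunc ℂ) f.num / algebraMap ℂ[X] (RatFunc ℂ) f.denom) := by
        rw [f.num_div_denom]
    _ = f.num.coeff (f.denom.natDegree - 1) := by
        have hm : ∀ a ∈ f.denom.roots.toFinset, 0 < f.denom.rootMultiplicity a := fun a ha =>
          (rootMultiplicity_pos f.denom_ne_zero).mpr
            (isRoot_of_mem_roots (Multiset.mem_toFinset.mp ha))
        simpa only [hD] using sum_resAt_div_prod_X_sub_C_pow _ hm (N := f.num) (by rwa [hD])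

theorem sum_resAt_eq_zero {f : RatFunc ℂ} (hf : IsFormOnU S f) : ∑ s ∈ S, resAt s f = 0 := by
  rcases eq_or_ne f 0 with rfl | hf0
  · simp
  have hdeg := (degree_num_add_two_le_iff hf0).mp hf.2
  rw [RatFunc.intDegree] at hdeg
  rw [sum_resAt_eq_coeff_num (degree_lt_degree (by omega)) hf.1]
  exact coeff_eq_zero_of_natDegree_lt (by omega)

lemma IsFormOnU.add {f g : RatFunc ℂ} (hf : IsFormOnU S f) (hg : IsFormOnU S g) :
    IsFormOnU S (f + g) := by
  refine ⟨fun a ha => ?_, ?_⟩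
  · rcases (root_mul.mp (ha.dvd (RatFunc.denom_add_dvd f g))) with h | h
    exacts [hf.1 a h, hg.1 a h]
  · rcases eq_or_ne f 0 with rfl | hf0
    · simpa using hg.2
    rcases eq_or_ne g 0 with rfl | hg0
    · simpa using hf.2
    rcases eq_or_ne (f + g) 0 with hfg | hfg
    · simp [hfg]
    rw [degree_num_add_two_le_iff hfg]
    exact (RatFunc.intDegree_add_le hg0 hfg).trans (max_le
      ((degree_num_add_two_le_iff hf0).mp hf.2) ((degree_num_add_two_le_iff hg0).mp hg.2))

lemma isFormOnU_sum {ι : Type*} (T : Finset ι) {f : ι → RatFunc ℂ}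
    (hf : ∀ i ∈ T, IsFormOnU S (f i)) : IsFormOnU S (∑ i ∈ T, f i) :=
  Finset.sum_induction f (IsFormOnU S) (fun _ _ => IsFormOnU.add S) (by simp [IsFormOnU]) hf

lemma isFormOnU_div {p q : ℂ[X]} (hq : ∀ a, q.IsRoot a → a ∈ S)
    (hdeg : p.natDegree + 2 ≤ q.natDegree) :
    IsFormOnU S (algebraMap ℂ[X] (RatFunc ℂ) p / algebraMap ℂ[X] (RatFunc ℂ) q) := by
  refine ⟨fun a ha => hq a (ha.dvd (RatFunc.denom_div_dvd p q)), ?_⟩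
  rcases eq_or_ne p 0 with rfl | hp
  · simp
  have hq0 : q ≠ 0 := by rintro rfl; simp at hdeg
  have hA : ∀ {r : ℂ[X]}, r ≠ 0 → algebraMap ℂ[X] (RatFunc ℂ) r ≠ 0 :=
    (map_ne_zero_iff _ (IsFractionRing.injective ℂ[X] (RatFunc ℂ))).mpr
  rw [degree_num_add_two_le_iff (div_ne_zero (hA hp) (hA hq0)),
    RatFunc.intDegree_div (hA hp) (hA hq0), RatFunc.intDegree_polynomial,
    RatFunc.intDegree_polynomial]
  omega

lemma resAt_sum_C_div_X_sub_C {ι : Type*} [Fintype ι] {a : ι → ℂ} (ha : Function.Injective a)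
    (d : ι → ℂ) (i : ι) :
    resAt (a i) (∑ j, algebraMap ℂ[X] (RatFunc ℂ) (C (d j)) /
      algebraMap ℂ[X] (RatFunc ℂ) (X - C (a j))) = d i := by
  rw [map_sum, Fintype.sum_eq_single i]
  · simpa using resAt_div_X_sub_C_pow (a i) (C (d i)) one_pos
  · intro j hji
    exact resAt_div_eq_zero_of_eval_ne_zero (by simpa [sub_eq_zero] using ha.ne hji.symm) _

lemma C_div_X_sub_C_sub_C_div_X_sub_C {K : Type*} [Field K] (c s t : K) :
    algebraMap K[X] (RatFunc K) (C c) / algebraMap K[X] (RatFunc K) (X - C s) -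
        algebraMap K[X] (RatFunc K) (C c) / algebraMap K[X] (RatFunc K) (X - C t) =
      algebraMap K[X] (RatFunc K) (C (c * (s - t))) /
        algebraMap K[X] (RatFunc K) ((X - C s) * (X - C t)) := by
  have hA : ∀ u : K, algebraMap K[X] (RatFunc K) (X - C u) ≠ 0 := fun u =>
    (map_ne_zero_iff _ (IsFractionRing.injective K[X] (RatFunc K))).mpr (X_sub_C_ne_zero u)
  rw [div_sub_div _ _ (hA s) (hA t), ← map_mul, ← map_mul, ← map_mul, ← map_sub]
  congr 2
  rw [C_mul, C_sub]
  ring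

theorem exists_isFormOnU_resAt_eq (hS : S.Nonempty) (d : {s : ℂ // s ∈ S} → ℂ)
    (hd : ∑ s, d s = 0) : ∃ f, IsFormOnU S f ∧ ∀ s : {s : ℂ // s ∈ S}, resAt s f = d s := by
  obtain ⟨t, ht⟩ := hS
  refine ⟨∑ s : {s : ℂ // s ∈ S}, algebraMap ℂ[X] (RatFunc ℂ) (C (d s)) /
      algebraMap ℂ[X] (RatFunc ℂ) (X - C s.1), ?_,
    resAt_sum_C_div_X_sub_C Subtype.val_injective d⟩
  have hzero : ∑ s : {s : ℂ // s ∈ S}, algebraMap ℂ[X] (RatFunc ℂ) (C (d s)) /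
      algebraMap ℂ[X] (RatFunc ℂ) (X - C t) = 0 := by
    rw [← Finset.sum_div, ← map_sum, ← map_sum, hd, C_0, map_zero, zero_div]
  rw [← sub_zero (∑ s : {s : ℂ // s ∈ S}, _), ← hzero, ← Finset.sum_sub_distrib]
  refine isFormOnU_sum S _ fun s _ => ?_
  rw [C_div_X_sub_C_sub_C_div_X_sub_C]
  refine isFormOnU_div S (fun a ha => ?_) ?_
  · rcases root_mul.mp ha with h | h
    exacts [root_X_sub_C.mp h ▸ s.2, root_X_sub_C.mp h ▸ ht]
  · rw [natDegree_C, natDegree_mul (X_sub_C_ne_zero _) (X_sub_C_ne_zero _), natDegree_X_sub_C,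
      natDegree_X_sub_C]

def antideriv (g : LaurentSeries ℂ) : LaurentSeries ℂ where
  coeff n := if n = 0 then 0 else g.coeff (n - 1) / n
  isPWO_support' := by
    refine (g.isPWO_support'.image_of_monotone (f := fun n : ℤ => n + 1)
      fun a b h => by dsimp only; omega).mono fun n hn => ⟨n - 1, fun h => hn ?_, by ring⟩
    simp [h]

lemma coeff_lder_neg_one (f : LaurentSeries ℂ) : (lder f).coeff (-1) = 0 := by
  show ((-1 + 1 : ℤ) : ℂ) * _ = 0
  simp

lemma lder_antideriv {g : LaurentSeries ℂ} (hg : g.coeff (-1) = 0) : lder (antideriv g) = g := by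
  ext n
  show ((n + 1 : ℤ) : ℂ) * (if n + 1 = 0 then 0 else g.coeff (n + 1 - 1) / ((n + 1 : ℤ) : ℂ)) =
    g.coeff n
  rcases eq_or_ne n (-1) with rfl | hn
  · simp [hg]
  · have hn' : n + 1 ≠ 0 := by omega
    rw [if_neg hn', add_sub_cancel_right, mul_div_cancel₀ _ (by exact_mod_cast hn')]

lemma res_lder_sub_expand (φ : FormalForms S) (f : RatFunc ℂ) :
    res S ((fun s => lder (φ s)) - expand S f) = -∑ s ∈ S, resAt s f := by
  simp only [res, Pi.sub_apply, HahnSeries.coeff_sub, coeff_lder_neg_one, coeff_expand,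
    zero_sub, Finset.sum_neg_distrib, Finset.sum_coe_sort S (fun s => resAt s f)]

theorem total_residue_identifies_H2c_with_C (hS : S.Nonempty) :
    -- `res_D` descends to the quotient `H²_{dR,c}(U)` …
    (∀ μ ∈ coboundaries S, res S μ = 0) ∧
    -- … and induces a bijection onto `ℂ`: injectivity …
    (∀ μ : FormalForms S, res S μ = 0 → μ ∈ coboundaries S) ∧
    -- … and surjectivity
    Function.Surjective (res S) := by
  refine ⟨?_, fun μ hμ => ?_, fun c => ?_⟩
  · rintro μ ⟨φ, f, hf, rfl⟩
    rw [res_lder_sub_expand, sum_resAt_eq_zero S hf, neg_zero]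
  · obtain ⟨f, hf, hres⟩ := exists_isFormOnU_resAt_eq S hS (fun s => -(μ s).coeff (-1))
      (by rw [Finset.sum_neg_distrib, ← res, hμ, neg_zero])
    refine ⟨fun s => antideriv (μ s + expand S f s), f, hf, funext fun s => ?_⟩
    rw [Pi.sub_apply, lder_antideriv (by rw [HahnSeries.coeff_add, coeff_expand, hres,
      add_neg_cancel]), add_sub_cancel_right]
  · obtain ⟨t, ht⟩ := hS
    refine ⟨Pi.single ⟨t, ht⟩ (HahnSeries.single (-1) c), ?_⟩
    rw [res, Fintype.sum_eq_single ⟨t, ht⟩ fun s hs => by simp [hs]]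
    simp

end Stmt19

end
end
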